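/- Let Ĝ be a group with a surjective homomorphism π: Ĝ → {±1} and kernel G, let λ̂ be a normalized π-twisted 2-cocycle on Ĝ valued in ℂˣ, and let λ be its restriction to G. Let (V, φ) be a λ-twisted representation of G and ς ∈ Ĝ∖G odd. For g ∈ G define F^ς_g := λ̂(g, ς) · ((φ(g))⁻¹)^∨: V^∨ → V^∨. Then: (a) F^ς_g is a morphism of λ-twisted representations from (V^∨, φ^ς) to (V^∨, φ^{gς}) (note gς is again odd), i.e. F^ς_g ∘ φ^ς(h) = φ^{gς}(h) ∘ F^ς_g for all h ∈ G; and (b) for all g₁, g₂ ∈ G one has F^{g₁ς}_{g₂} ∘ F^ς_{g₁} = F^ς_{g₂g₁}. (This is the statement of Section 4.5 of the paper that the F^ς_g define a G-torsor of duality structures on Rep^λ(G).) -/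

import Mathlib

/-- Conjugation `g ↦ ς g ς⁻¹` preserves the kernel of `π`. -/
def kconj {Ghat : Type*} [Group Ghat] (π : Ghat →* ℤˣ) (ς : Ghat) (g : π.ker) :
    π.ker :=
  ⟨ς * (g : Ghat) * ς⁻¹, by
    have hg : π (g : Ghat) = 1 := MonoidHom.mem_ker.mp g.2
    rw [MonoidHom.mem_ker, map_mul, map_mul, map_inv, hg, mul_one, mul_inv_cancel]⟩

/-- The reflection-twisted transgression `τ^ref_π(λ̂)([ω]g)` of the paper:
`τ_ω(g) = λ̂(g⁻¹,g)⁻¹ · λ̂(ωg⁻¹ω⁻¹, ω) · λ̂(ω, g⁻¹)⁻¹`. -/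
def tau {Ghat : Type*} [Group Ghat] (lam : Ghat → Ghat → ℂˣ) (ω g : Ghat) : ℂˣ :=
  (lam g⁻¹ g)⁻¹ * lam (ω * g⁻¹ * ω⁻¹) ω * (lam ω g⁻¹)⁻¹

/-- The dualization construction of Section 4.5 of the paper:
`φ^ω(g) := τ_ω(g)⁻¹ · (φ(ω g⁻¹ ω⁻¹))^∨` on the dual space. -/
noncomputable def dualTw {Ghat : Type*} [Group Ghat] (π : Ghat →* ℤˣ)
    (lam : Ghat → Ghat → ℂˣ) (ω : Ghat) {V : Type*} [AddCommGroup V] [Module ℂ V]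
    (φ : π.ker → (V →ₗ[ℂ] V)) (g : π.ker) :
    Module.Dual ℂ V →ₗ[ℂ] Module.Dual ℂ V :=
  (((tau lam ω (g : Ghat))⁻¹ : ℂˣ) : ℂ) • LinearMap.dualMap (φ (kconj π ω g⁻¹))

/-- The non-singular form functor `F^ς_g := λ̂(g,ς)·((φ(g))⁻¹)^∨` of Section 4.5 of
the paper. -/
noncomputable def Fmap {Ghat : Type*} [Group Ghat] (π : Ghat →* ℤˣ)
    (lam : Ghat → Ghat → ℂˣ) {V : Type*} [AddCommGroup V] [Module ℂ V]
    (φ : π.ker → (V ≃ₗ[ℂ] V)) (ς : Ghat) (g : π.ker) :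
    Module.Dual ℂ V →ₗ[ℂ] Module.Dual ℂ V :=
  ((lam (g : Ghat) ς : ℂˣ) : ℂ) • LinearMap.dualMap (φ g).symm.toLinearMap

/-! Composing duals turns both claims into scalar identities, via `φ(g) ∘ φ(h) = λ(g,h) φ(gh)`.
The scalars are compared using the cocycle condition with an even first argument, where the twist
is trivial: (b) is one instance of it, and (a) is the transformation rule
`τ_{gω}(h) · λ̂(g, kg⁻¹) = τ_ω(h) · λ̂(kg⁻¹, g)` for `k = ωh⁻¹ω⁻¹`, a combination of four instances. -/

section TwistedCocycle

variable {Ghat : Type*} [Group Ghat]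

def IsTwistedCocycle {M : Type*} [CommGroup M] (π : Ghat →* ℤˣ) (lam : Ghat → Ghat → M) :
    Prop :=
  ∀ ω₁ ω₂ ω₃ : Ghat,
    lam ω₂ ω₃ ^ ((π ω₁ : ℤˣ) : ℤ) * lam ω₁ (ω₂ * ω₃) = lam (ω₁ * ω₂) ω₃ * lam ω₁ ω₂

theorem IsTwistedCocycle.mul_of_mem_ker {M : Type*} [CommGroup M] {π : Ghat →* ℤˣ}
    {lam : Ghat → Ghat → M} (hlam : IsTwistedCocycle π lam) {g : Ghat} (hg : g ∈ π.ker)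
    (a b : Ghat) : lam a b * lam g (a * b) = lam (g * a) b * lam g a := by
  simpa [MonoidHom.mem_ker.mp hg] using hlam g a b

theorem kconj_mul_left (π : Ghat →* ℤˣ) (g : π.ker) (ω : Ghat) (x : π.ker) :
    kconj π ((g : Ghat) * ω) x = g * kconj π ω x * g⁻¹ := by
  ext
  simp only [kconj, Subgroup.coe_mul, InvMemClass.coe_inv]
  group

theorem tau_mul_left {π : Ghat →* ℤˣ} {lam : Ghat → Ghat → ℂˣ} (hlam : IsTwistedCocycle π lam)
    (g h : π.ker) (ω : Ghat) :
    tau lam ((g : Ghat) * ω) h * lam g ↑(kconj π ω h⁻¹ * g⁻¹)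
      = tau lam ω h * lam ↑(kconj π ω h⁻¹ * g⁻¹) g := by
  set k : Ghat := (kconj π ω h⁻¹ : Ghat) with hk
  have hωh : ω * (h : Ghat)⁻¹ = k * ω := by simp [hk, kconj]
  have hconj : (g : Ghat) * ω * (h : Ghat)⁻¹ * (g * ω)⁻¹ = g * k * (g : Ghat)⁻¹ := by
    rw [mul_assoc (g : Ghat), hωh]
    group
  have E1 := hlam.mul_of_mem_ker g.2 k ω
  have E2 := hlam.mul_of_mem_ker (g * kconj π ω h⁻¹ * g⁻¹).2 g ω
  have E3 := hlam.mul_of_mem_ker g.2 ω (h : Ghat)⁻¹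
  have E4 := hlam.mul_of_mem_ker g.2 (k * (g : Ghat)⁻¹) g
  rw [hωh] at E3
  rw [show (g : Ghat) * (k * (g : Ghat)⁻¹) = g * k * (g : Ghat)⁻¹ by group] at E4
  simp only [Subgroup.coe_mul, InvMemClass.coe_inv, ← hk, inv_mul_cancel_right] at E2 E4 ⊢
  simp only [tau, hconj, hωh, mul_inv_cancel_right]
  -- in additive notation the goal is a `ℤ`-linear combination of the four relations
  apply Additive.ofMul.injective
  apply_fun Additive.ofMul at E1 E2 E3 E4
  simp only [ofMul_mul, ofMul_inv] at E1 E2 E3 E4 ⊢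
  linear_combination (norm := abel) E2 + E3 - E4 - E1

end TwistedCocycle

theorem LinearMap.dualMap_smul {R M₁ M₂ : Type*} [CommSemiring R] [AddCommMonoid M₁]
    [Module R M₁] [AddCommMonoid M₂] [Module R M₂] (c : R) (f : M₁ →ₗ[R] M₂) :
    (c • f).dualMap = c • f.dualMap :=
  map_smul (Module.Dual.transpose (R := R)) c f

theorem LinearMap.smul_dualMap_comp_smul_dualMap {R M₁ M₂ M₃ : Type*} [CommSemiring R]
    [AddCommMonoid M₁] [Module R M₁] [AddCommMonoid M₂] [Module R M₂] [AddCommMonoid M₃]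
    [Module R M₃] (a b : R) (f : M₁ →ₗ[R] M₂) (g : M₂ →ₗ[R] M₃) :
    (a • f.dualMap) ∘ₗ (b • g.dualMap) = (a * b) • (g ∘ₗ f).dualMap := by
  rw [smul_comp, comp_smul, dualMap_comp_dualMap, smul_smul]

def IsTwistedRep {G R V : Type*} [Group G] [CommRing R] [AddCommGroup V] [Module R V]
    (c : G → G → Rˣ) (φ : G → V ≃ₗ[R] V) : Prop :=
  ∀ g h, (φ g).toLinearMap ∘ₗ (φ h).toLinearMap = (c g h : R) • (φ (g * h)).toLinearMap

namespace IsTwistedRep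

open LinearMap

variable {G R V : Type*} [Group G] [CommRing R] [AddCommGroup V] [Module R V]
  {c : G → G → Rˣ} {φ : G → V ≃ₗ[R] V}

theorem symm_comp_symm (hφ : IsTwistedRep c φ) (g h : G) :
    (φ h).symm.toLinearMap ∘ₗ (φ g).symm.toLinearMap
      = (((c g h)⁻¹ : Rˣ) : R) • (φ (g * h)).symm.toLinearMap := by
  ext x
  have key := LinearMap.congr_fun (hφ g h) ((φ (g * h)).symm x)
  simp only [coe_comp, Function.comp_apply, LinearEquiv.coe_coe, LinearMap.smul_apply,
    LinearEquiv.apply_symm_apply] at key ⊢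
  rw [LinearEquiv.symm_apply_eq, LinearEquiv.symm_apply_eq, map_smul, map_smul, key, smul_smul,
    Units.inv_mul, one_smul]

theorem comp_symm (hφ : IsTwistedRep c φ) (g k : G) :
    (φ k).toLinearMap ∘ₗ (φ g).symm.toLinearMap
      = (((c (k * g⁻¹) g)⁻¹ : Rˣ) : R) • (φ (k * g⁻¹)).toLinearMap := by
  ext x
  have key := LinearMap.congr_fun (hφ (k * g⁻¹) g) ((φ g).symm x)
  simp only [coe_comp, Function.comp_apply, LinearEquiv.coe_coe, LinearMap.smul_apply,
    LinearEquiv.apply_symm_apply, inv_mul_cancel_right] at key ⊢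
  rw [key, smul_smul, Units.inv_mul, one_smul]

theorem symm_comp (hφ : IsTwistedRep c φ) (g k : G) :
    (φ g).symm.toLinearMap ∘ₗ (φ k).toLinearMap
      = (((c g (g⁻¹ * k))⁻¹ : Rˣ) : R) • (φ (g⁻¹ * k)).toLinearMap := by
  ext x
  have key := LinearMap.congr_fun (hφ g (g⁻¹ * k)) x
  simp only [coe_comp, Function.comp_apply, LinearEquiv.coe_coe, LinearMap.smul_apply,
    mul_inv_cancel_left] at key ⊢
  rw [LinearEquiv.symm_apply_eq, map_smul, key, smul_smul, Units.inv_mul, one_smul]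

end IsTwistedRep

theorem torsor_of_duality_structures_general
    {Ghat : Type*} [Group Ghat] (π : Ghat →* ℤˣ)
    (lam : Ghat → Ghat → ℂˣ)
    (hcoc : ∀ ω₁ ω₂ ω₃ : Ghat,
      lam ω₂ ω₃ ^ ((π ω₁ : ℤˣ) : ℤ) * lam ω₁ (ω₂ * ω₃) = lam (ω₁ * ω₂) ω₃ * lam ω₁ ω₂)
    {V : Type*} [AddCommGroup V] [Module ℂ V]
    (φ : π.ker → (V ≃ₗ[ℂ] V))
    (hφ : ∀ g h : π.ker, (φ g).toLinearMap ∘ₗ (φ h).toLinearMap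
      = ((lam (g : Ghat) (h : Ghat) : ℂˣ) : ℂ) • (φ (g * h)).toLinearMap)
    (ς : Ghat) :
    (∀ (g : π.ker) (h : π.ker),
        Fmap π lam φ ς g ∘ₗ dualTw π lam ς (fun k => (φ k).toLinearMap) h
          = dualTw π lam ((g : Ghat) * ς) (fun k => (φ k).toLinearMap) h ∘ₗ
              Fmap π lam φ ς g) ∧
      (∀ g₁ g₂ : π.ker,
        Fmap π lam φ ((g₁ : Ghat) * ς) g₂ ∘ₗ Fmap π lam φ ς g₁
          = Fmap π lam φ ς (g₂ * g₁)) := by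
  have hlam : IsTwistedCocycle π lam := hcoc
  have hrep : IsTwistedRep (fun g h : π.ker => lam g h) φ := hφ
  refine ⟨fun g h => ?_, fun g₁ g₂ => ?_⟩
  · simp only [Fmap, dualTw, kconj_mul_left, LinearMap.smul_dualMap_comp_smul_dualMap]
    rw [hrep.comp_symm, hrep.symm_comp,
      show g⁻¹ * (g * kconj π ς h⁻¹ * g⁻¹) = kconj π ς h⁻¹ * g⁻¹ by group,
      LinearMap.dualMap_smul, LinearMap.dualMap_smul, smul_smul, smul_smul]
    congr 1
    simp only [← Units.val_mul]
    congr 1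
    rw [mul_comm _ (lam g ς), mul_assoc, mul_assoc, ← mul_inv, ← mul_inv, tau_mul_left hlam]
  · simp only [Fmap, LinearMap.smul_dualMap_comp_smul_dualMap]
    rw [hrep.symm_comp_symm, LinearMap.dualMap_smul, smul_smul]
    congr 1
    simp only [← Units.val_mul, Subgroup.coe_mul]
    rw [Units.val_inj, mul_inv_eq_iff_eq_mul]
    exact (mul_comm _ _).trans (hlam.mul_of_mem_ker g₂.2 g₁ ς)

/-- The statement of Section 4.5 of the paper that the maps `F^ς_g` define a `G`-torsor
of duality structures on `Rep^λ(G)`: (a) `F^ς_g` is a morphism of `λ`-twisted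
representations `(V^∨, φ^ς) → (V^∨, φ^{gς})`, and (b) `F^{g₁ς}_{g₂} ∘ F^ς_{g₁} = F^ς_{g₂g₁}`. -/
theorem torsor_of_duality_structures
    {Ghat : Type*} [Group Ghat] (π : Ghat →* ℤˣ) (hπ : Function.Surjective π)
    (lam : Ghat → Ghat → ℂˣ) (hnorm : lam 1 1 = 1)
    (hcoc : ∀ ω₁ ω₂ ω₃ : Ghat,
      lam ω₂ ω₃ ^ ((π ω₁ : ℤˣ) : ℤ) * lam ω₁ (ω₂ * ω₃) = lam (ω₁ * ω₂) ω₃ * lam ω₁ ω₂)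
    {V : Type*} [AddCommGroup V] [Module ℂ V] [FiniteDimensional ℂ V]
    (φ : π.ker → (V ≃ₗ[ℂ] V))
    (hφ : ∀ g h : π.ker, (φ g).toLinearMap ∘ₗ (φ h).toLinearMap
      = ((lam (g : Ghat) (h : Ghat) : ℂˣ) : ℂ) • (φ (g * h)).toLinearMap)
    (ς : Ghat) (hς : π ς = -1) :
    (∀ (g : π.ker) (h : π.ker),
        Fmap π lam φ ς g ∘ₗ dualTw π lam ς (fun k => (φ k).toLinearMap) h
          = dualTw π lam ((g : Ghat) * ς) (fun k => (φ k).toLinearMap) h ∘ₗ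
              Fmap π lam φ ς g) ∧
      (∀ g₁ g₂ : π.ker,
        Fmap π lam φ ((g₁ : Ghat) * ς) g₂ ∘ₗ Fmap π lam φ ς g₁
          = Fmap π lam φ ς (g₂ * g₁)) :=
  torsor_of_duality_structures_general π lam hcoc φ hφ ς
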